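/- In the setting of the main theorem (i.i.d. operators (T_n) from a countable set 𝒱 of Volterra QSOs containing, for each k ∈ {1,…,m}, an operator V_k with (V_k x)_k = x_k^2, with ℙ(T_n = V_j) = ν_j > 0 for j ≤ m): for every ε > 0 and every x ∈ S^{m-1}, the probabilities ℙ((T_n ∘ ⋯ ∘ T_1)(x) ∉ U_ε) decay fast enough to be summable, i.e. ∑_{n=1}^∞ ℙ((T_n ∘ ⋯ ∘ T_1)(x) ∈ S^{m-1} \ U_ε) < ∞. -/

import Mathlib

/-!
Let `ψ(t) = a_⌊log₂ (1/t)⌋` for a decreasing positive sequence `(a_k)`, and let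
`Z(y) = min_i ∑_{j ≠ i} ψ(y_j)`. Every coordinate but the largest is at most `1/2`. A Volterra
operator at most doubles it, which lowers its level index `⌊log₂ (1/t)⌋` by one, while `V_j`
(chosen with probability `ν_j ≥ v`) squares it, which doubles the index. If the increments of
`-log a_k` grow geometrically, with ratio `4 (1 - v) / v`, up to a cap of order `v`, the rare
large gain outweighs the frequent small loss, so `E[Z(X_{n+1}) | X_n] ≤ r Z(X_n)` for some
`r < 1`. Hence `E Z(X_n) ≤ rⁿ Z(x)`. Leaving `U_ε` forces `Z ≥ ψ(ε) > 0`, so by Markov's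
inequality the exit probabilities are dominated by a geometric series.
-/

open MeasureTheory ProbabilityTheory

/-- The map of a quadratic stochastic operator given by coefficients `p`. -/
noncomputable def qsoMap {m : ℕ} (p : Fin m → Fin m → Fin m → ℝ) (x : Fin m → ℝ) :
    Fin m → ℝ :=
  fun k => ∑ i, ∑ j, p i j k * x i * x j

open Finset Real
open scoped ENNReal

namespace RandomVolterra

section RandomOrbit

variable {α Ω : Type*} {F : ℕ → α → α} {x : α}

def orbit (F : ℕ → α → α) (x : α) (s : ℕ → ℕ) (N : ℕ) : α :=
  (List.range N).foldl (fun y l => F (s l) y) x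

lemma orbit_succ (s : ℕ → ℕ) (N : ℕ) : orbit F x s (N + 1) = F (s N) (orbit F x s N) := by
  simp only [orbit, List.range_succ, List.foldl_append, List.foldl_cons, List.foldl_nil]

lemma orbit_congr {s s' : ℕ → ℕ} {N : ℕ} (h : ∀ l < N, s l = s' l) :
    orbit F x s N = orbit F x s' N := by
  induction N with
  | zero => rfl
  | succ N ih =>
    rw [orbit_succ, orbit_succ, h N N.lt_succ_self, ih fun l hl => h l (hl.trans N.lt_succ_self)]

lemma orbit_mem {S : Set α} (hS : ∀ r, Set.MapsTo (F r) S S) (hx : x ∈ S) (s : ℕ → ℕ) (N : ℕ) :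
    orbit F x s N ∈ S := by
  induction N with
  | zero => exact hx
  | succ N ih => rw [orbit_succ]; exact hS _ ih

variable [MeasurableSpace α] {mΩ : MeasurableSpace Ω} {μ : Measure Ω} {ξ : ℕ → Ω → ℕ}

lemma measurable_orbit (hF : ∀ r, Measurable (F r)) (hξ : ∀ n, Measurable (ξ n)) (N : ℕ) :
    Measurable fun ω => orbit F x (ξ · ω) N := by
  induction N with
  | zero => exact measurable_const
  | succ N ih =>
    simp only [orbit_succ]
    exact (measurable_from_prod_countable_left (f := fun q : α × ℕ => F q.2 q.1) hF).comp
      (ih.prodMk (hξ N))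

/-- The orbit up to time `N` is a function of `ξ 0, …, ξ (N - 1)`, which are independent
of `ξ N`. -/
lemma indepFun_orbit (hξ : ∀ n, Measurable (ξ n)) (hind : iIndepFun ξ μ) (N : ℕ) :
    IndepFun (fun ω => orbit F x (ξ · ω) N) (ξ N) μ := by
  classical
  have hpast := hind.indepFun_finset (range N) {N} (by simp) hξ
  let Φ : ((i : range N) → ℕ) → α := fun w =>
    orbit F x (fun l => if h : l ∈ range N then w ⟨l, h⟩ else 0) N
  have hΦ : (fun ω => orbit F x (ξ · ω) N) = Φ ∘ fun ω (i : range N) => ξ i ω := by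
    funext ω
    exact orbit_congr fun l hl => by simp [mem_range.2 hl]
  rw [hΦ]
  exact hpast.comp (measurable_of_countable Φ)
    (measurable_of_countable fun w : ({N} : Finset ℕ) → ℕ => w ⟨N, mem_singleton_self N⟩)

lemma lintegral_comp_eq_lintegral_tsum [IsFiniteMeasure μ] {Y : Ω → α} {η : Ω → ℕ}
    (hY : Measurable Y) (hη : Measurable η) (hind : IndepFun Y η μ) {G : α → ℕ → ℝ≥0∞}
    (hG : ∀ r, Measurable fun y => G y r) :
    ∫⁻ ω, G (Y ω) (η ω) ∂μ = ∫⁻ ω, ∑' r, μ {ω | η ω = r} * G (Y ω) r ∂μ := by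
  have hGm : Measurable fun q : α × ℕ => G q.1 q.2 := measurable_from_prod_countable_left hG
  have hmap := (indepFun_iff_map_prod_eq_prod_map_map hY.aemeasurable hη.aemeasurable).1 hind
  calc ∫⁻ ω, G (Y ω) (η ω) ∂μ = ∫⁻ q, G q.1 q.2 ∂(μ.map fun ω => (Y ω, η ω)) :=
        (lintegral_map hGm (hY.prodMk hη)).symm
    _ = ∫⁻ y, ∫⁻ r, G y r ∂(μ.map η) ∂(μ.map Y) := by
        rw [hmap, lintegral_prod _ hGm.aemeasurable]
    _ = ∫⁻ y, ∑' r, μ {ω | η ω = r} * G y r ∂(μ.map Y) := by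
        refine lintegral_congr fun y => ?_
        rw [lintegral_countable']
        refine tsum_congr fun r => ?_
        rw [Measure.map_apply hη (measurableSet_singleton r), mul_comm]
        rfl
    _ = ∫⁻ ω, ∑' r, μ {ω | η ω = r} * G (Y ω) r ∂μ :=
        lintegral_map (Measurable.tsum fun r => (hG r).const_mul _) hY

variable [IsProbabilityMeasure μ]

lemma lintegral_orbit_le (hF : ∀ r, Measurable (F r)) (hξ : ∀ n, Measurable (ξ n))
    (hind : iIndepFun ξ μ) {w : ℕ → ℝ≥0∞} (hlaw : ∀ n r, μ {ω | ξ n ω = r} = w r)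
    {S : Set α} (hS : ∀ r, Set.MapsTo (F r) S S) (hx : x ∈ S) {V : α → ℝ≥0∞}
    (hV : Measurable V) {c : ℝ≥0∞} (hdrift : ∀ y ∈ S, ∑' r, w r * V (F r y) ≤ c * V y)
    (N : ℕ) : ∫⁻ ω, V (orbit F x (ξ · ω) N) ∂μ ≤ c ^ N * V x := by
  induction N with
  | zero => simp [orbit]
  | succ N ih =>
    calc ∫⁻ ω, V (orbit F x (ξ · ω) (N + 1)) ∂μ
        = ∫⁻ ω, ∑' r, w r * V (F r (orbit F x (ξ · ω) N)) ∂μ := by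
          simp only [orbit_succ, ← hlaw N]
          exact lintegral_comp_eq_lintegral_tsum (G := fun y r => V (F r y))
            (measurable_orbit hF hξ N) (hξ N) (indepFun_orbit hξ hind N) fun r => hV.comp (hF r)
      _ ≤ ∫⁻ ω, c * V (orbit F x (ξ · ω) N) ∂μ :=
          lintegral_mono fun ω => hdrift _ (orbit_mem hS hx _ N)
      _ = c * ∫⁻ ω, V (orbit F x (ξ · ω) N) ∂μ :=
          lintegral_const_mul c (hV.comp (measurable_orbit hF hξ N))
      _ ≤ c ^ (N + 1) * V x := by
          rw [pow_succ', mul_assoc]; gcongr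

end RandomOrbit

lemma tsum_measure_le_lt_top_of_lintegral_le_geometric {Ω : Type*} {mΩ : MeasurableSpace Ω}
    {μ : Measure Ω} {f : ℕ → Ω → ℝ≥0∞} (hf : ∀ n, AEMeasurable (f n) μ) {c K δ : ℝ≥0∞}
    (hc : c < 1) (hK : K ≠ ∞) (hδ : δ ≠ 0) (hδ' : δ ≠ ∞)
    (hbound : ∀ n, ∫⁻ ω, f n ω ∂μ ≤ c ^ n * K) :
    ∑' n, μ {ω | δ ≤ f n ω} < ∞ :=
  calc ∑' n, μ {ω | δ ≤ f n ω} ≤ ∑' n, c ^ n * (K / δ) := ENNReal.tsum_le_tsum fun n =>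
        (meas_ge_le_lintegral_div (hf n) hδ hδ').trans <| by
          rw [← mul_div_assoc]; exact ENNReal.div_le_div_right (hbound n) δ
    _ = (1 - c)⁻¹ * (K / δ) := by rw [ENNReal.tsum_mul_right, ENNReal.tsum_geometric]
    _ < ∞ :=
        ENNReal.mul_lt_top (ENNReal.inv_lt_top.2 (tsub_pos_of_lt hc)) (ENNReal.div_lt_top hK hδ)

noncomputable section

def capIndex (v : ℝ) : ℕ := ⌈8 / v⌉₊

def growthRatio (v : ℝ) : ℝ := 4 * (1 - v) / v

/-- The increments of `-log a_k`: geometric with ratio `growthRatio v` up to `capIndex v`, and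
constantly `v / 8` from there on (the natural subtraction truncates to `0`). -/
def increment (v : ℝ) (i : ℕ) : ℝ := v / 8 * (growthRatio v)⁻¹ ^ (capIndex v - i)

def level (v : ℝ) (k : ℕ) : ℝ := exp (-∑ i ∈ range k, increment v i)

def rate (v : ℝ) : ℝ := 1 - increment v 0 / 4

/-- `ψ(t) = a_⌊log₂ (1/t)⌋`; the case `t ≤ 0` is separate because `logb 2 0 = 0`. -/
def lyap (v t : ℝ) : ℝ := if t ≤ 0 then 0 else level v ⌊-logb 2 t⌋₊

end

lemma exp_le_one_add_add_sq {x : ℝ} (h0 : 0 ≤ x) (h1 : x ≤ 1) : exp x ≤ 1 + x + x ^ 2 := by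
  have := abs_le.1 (abs_exp_sub_one_sub_id_le (abs_le.2 ⟨by linarith, h1⟩))
  linarith [this.2]

lemma exp_neg_le_inv_one_add {u J : ℝ} (hu : 0 ≤ u) (huJ : u ≤ J) : exp (-J) ≤ (1 + u)⁻¹ := by
  rw [exp_neg]
  exact inv_anti₀ (by linarith) ((by linarith [add_one_le_exp J] : 1 + u ≤ exp J))

/-- `level_drift` divided by `a_{k+1}`: the doubling move costs a factor `exp L`, the squaring
move gains a factor `exp (-J)`. -/
lemma one_sub_mul_exp_add_mul_exp_neg_le {v L J : ℝ} (hv : 0 < v) (hv8 : v ≤ 1 / 8)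
    (hL0 : 0 ≤ L) (hL : L ≤ v / 8) (hJ : 4 * (1 - v) * L ≤ v * J) :
    (1 - v) * exp L + v * exp (-J) ≤ 1 - L / 4 := by
  set u := 4 * (1 - v) * L / v
  have hu0 : 0 ≤ u := div_nonneg (mul_nonneg (by linarith) hL0) hv.le
  have hvu : v * u = 4 * (1 - v) * L := by simp only [u]; field_simp
  have hu1 : u ≤ 1 := by
    rw [div_le_one hv]; nlinarith
  have huJ : u ≤ J := by
    rw [div_le_iff₀ hv]; linarith
  have hexpJ : v * exp (-J) ≤ v - 2 * (1 - v) * L := by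
    calc v * exp (-J) ≤ v * (1 + u)⁻¹ :=
          mul_le_mul_of_nonneg_left (exp_neg_le_inv_one_add hu0 huJ) hv.le
      _ ≤ v - 2 * (1 - v) * L := by
          rw [← div_eq_mul_inv, div_le_iff₀ (by linarith)]
          nlinarith [mul_nonneg (mul_nonneg (by linarith : (0:ℝ) ≤ 1 - v) hL0)
            (by linarith : (0:ℝ) ≤ 1 - u)]
  have hexpL := exp_le_one_add_add_sq hL0 (by linarith)
  nlinarith [mul_le_mul_of_nonneg_left hexpL (by linarith : (0:ℝ) ≤ 1 - v),
    mul_nonneg hL0 hL0, mul_nonneg (mul_nonneg hv.le hL0) hL0]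

lemma level_pos {v : ℝ} (k : ℕ) : 0 < level v k := exp_pos _

section Level

variable {v : ℝ} (hv : 0 < v) (hv8 : v ≤ 1 / 8)
include hv hv8

lemma one_le_growthRatio : 1 ≤ growthRatio v := by
  rw [growthRatio, le_div_iff₀ hv]; linarith

lemma increment_pos (i : ℕ) : 0 < increment v i := by
  have := one_le_growthRatio hv hv8
  unfold increment; positivity

lemma increment_le (i : ℕ) : increment v i ≤ v / 8 := by
  have := one_le_growthRatio hv hv8
  unfold increment
  exact mul_le_of_le_one_right (by positivity)
    (pow_le_one₀ (by positivity) (inv_le_one_of_one_le₀ this))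

lemma increment_mono : Monotone (increment v) := by
  have := one_le_growthRatio hv hv8
  intro i j hij
  unfold increment
  exact mul_le_mul_of_nonneg_left
    (pow_le_pow_of_le_one (by positivity) (inv_le_one_of_one_le₀ this) (by omega)) (by positivity)

lemma increment_succ {i : ℕ} (hi : i < capIndex v) :
    increment v (i + 1) = growthRatio v * increment v i := by
  have := one_le_growthRatio hv hv8
  obtain ⟨d, hd⟩ : ∃ d, capIndex v - i = d + 1 := ⟨capIndex v - i - 1, by omega⟩
  have hd' : capIndex v - (i + 1) = d := by omega
  unfold increment
  rw [hd, hd', pow_succ]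
  field_simp

omit hv hv8 in
lemma increment_of_capIndex_le {i : ℕ} (hi : capIndex v ≤ i) : increment v i = v / 8 := by
  simp [increment, Nat.sub_eq_zero_of_le hi]

lemma four_mul_increment_le (k : ℕ) :
    4 * (1 - v) * increment v k ≤ v * ((k + 1) * increment v (k + 1)) := by
  rcases lt_or_ge k (capIndex v) with hk | hk
  · have h1 : (1 : ℝ) ≤ k + 1 := by linarith [(Nat.cast_nonneg k : (0:ℝ) ≤ k)]
    have h2 : v * growthRatio v = 4 * (1 - v) := by rw [growthRatio]; field_simp
    have h3 : 0 ≤ 4 * (1 - v) * increment v k :=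
      mul_nonneg (by linarith) (increment_pos hv hv8 k).le
    calc 4 * (1 - v) * increment v k ≤ (k + 1) * (4 * (1 - v) * increment v k) :=
          le_mul_of_one_le_left h3 h1
      _ = v * ((k + 1) * increment v (k + 1)) := by
          rw [increment_succ hv hv8 hk, ← h2]; ring
  · rw [increment_of_capIndex_le (i := k + 1) (by omega)]
    have h8 : 8 / v ≤ k + 1 := by
      have := Nat.le_ceil (8 / v)
      have : (capIndex v : ℝ) ≤ k := by exact_mod_cast hk
      unfold capIndex at this; linarith
    rw [div_le_iff₀ hv] at h8
    nlinarith [increment_le hv hv8 k]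

lemma level_antitone : Antitone (level v) := fun _ _ hij =>
  exp_le_exp.2 <| neg_le_neg <| sum_le_sum_of_subset_of_nonneg (range_subset_range.2 hij)
    fun i _ _ => (increment_pos hv hv8 i).le

omit hv hv8 in
lemma level_eq_exp_mul_level {k n : ℕ} (hkn : k ≤ n) :
    level v n = exp (-∑ i ∈ Ico k n, increment v i) * level v k := by
  rw [level, level, ← exp_add, ← sum_range_add_sum_Ico _ hkn]
  ring_nf

lemma level_drift (k : ℕ) :
    (1 - v) * level v k + v * level v (2 * k + 2) ≤ rate v * level v (k + 1) := by
  set J := ∑ i ∈ Ico (k + 1) (2 * k + 2), increment v i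
  have hstep : level v k = exp (increment v k) * level v (k + 1) := by
    rw [level_eq_exp_mul_level (Nat.le_succ k), Nat.Ico_succ_singleton, sum_singleton,
      ← mul_assoc, ← exp_add, add_neg_cancel, exp_zero, one_mul]
  have hjump : level v (2 * k + 2) = exp (-J) * level v (k + 1) :=
    level_eq_exp_mul_level (by omega)
  have hJ : (k + 1) * increment v (k + 1) ≤ J := by
    have := card_nsmul_le_sum (Ico (k + 1) (2 * k + 2)) (increment v) (increment v (k + 1))
      fun i hi => increment_mono hv hv8 (mem_Ico.1 hi).1
    rwa [Nat.card_Ico, show 2 * k + 2 - (k + 1) = k + 1 by omega, nsmul_eq_mul,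
      Nat.cast_succ] at this
  have hscalar := one_sub_mul_exp_add_mul_exp_neg_le hv hv8 (increment_pos hv hv8 k).le
    (increment_le hv hv8 k)
    ((four_mul_increment_le hv hv8 k).trans (mul_le_mul_of_nonneg_left hJ hv.le))
  have hrate : 1 - increment v k / 4 ≤ rate v := by
    have := increment_mono hv hv8 (Nat.zero_le k)
    rw [rate]; linarith
  rw [hstep, hjump]
  have := (level_pos (k + 1) : 0 < level v (k + 1))
  nlinarith

lemma rate_nonneg : 0 ≤ rate v := by
  have := increment_le hv hv8 0
  rw [rate]; linarith

lemma rate_lt_one : rate v < 1 := by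
  have := increment_pos hv hv8 0
  rw [rate]; linarith

end Level

lemma lyap_nonneg (v t : ℝ) : 0 ≤ lyap v t := by
  unfold lyap; split_ifs
  exacts [le_rfl, (level_pos _).le]

lemma lyap_pos (v : ℝ) {t : ℝ} (ht : 0 < t) : 0 < lyap v t := by
  rw [lyap, if_neg ht.not_ge]; exact level_pos _

section Lyap

variable {v : ℝ} (hv : 0 < v) (hv8 : v ≤ 1 / 8)
include hv hv8

lemma lyap_mono : Monotone (lyap v) := by
  intro t s hts
  rcases le_or_gt t 0 with ht | ht
  · rw [lyap, if_pos ht]; exact lyap_nonneg v s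
  · rw [lyap, lyap, if_neg ht.not_ge, if_neg (ht.trans_le hts).not_ge]
    exact level_antitone hv hv8 (Nat.floor_le_floor (neg_le_neg
      (logb_le_logb_of_le one_lt_two ht hts)))

lemma lyap_drift {t : ℝ} (h0 : 0 ≤ t) (h2 : t ≤ 1 / 2) :
    (1 - v) * lyap v (2 * t) + v * lyap v (t ^ 2) ≤ rate v * lyap v t := by
  rcases h0.eq_or_lt with rfl | ht
  · simp [lyap]
  set L := -logb 2 t
  have hL1 : 1 ≤ L := by
    have := logb_le_logb_of_le one_lt_two ht h2
    rw [one_div, logb_inv, logb_self_eq_one one_lt_two] at this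
    linarith
  obtain ⟨k, hk⟩ : ∃ k, ⌊L⌋₊ = k + 1 := ⟨⌊L⌋₊ - 1, by
    have := Nat.one_le_floor_iff L |>.2 hL1; omega⟩
  have hlyap : lyap v t = level v (k + 1) := by rw [lyap, if_neg ht.not_ge, hk]
  have hdouble : lyap v (2 * t) = level v k := by
    rw [lyap, if_neg (by positivity : (0:ℝ) < 2 * t).not_ge, logb_mul two_ne_zero ht.ne',
      logb_self_eq_one one_lt_two, neg_add, ← sub_eq_neg_add, Nat.floor_sub_one, hk,
      Nat.add_sub_cancel]
  have hsquare : lyap v (t ^ 2) ≤ level v (2 * k + 2) := by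
    rw [lyap, if_neg (by positivity : (0:ℝ) < t ^ 2).not_ge, logb_pow, Nat.cast_ofNat,
      neg_mul_eq_mul_neg]
    apply level_antitone hv hv8
    apply Nat.le_floor
    have := Nat.floor_le (zero_le_one.trans hL1)
    rw [hk] at this
    push_cast at this ⊢
    linarith
  rw [hlyap, hdouble]
  nlinarith [level_drift hv hv8 k, mul_le_mul_of_nonneg_left hsquare hv.le]

end Lyap

section QSO

variable {m : ℕ} {q : Fin m → Fin m → Fin m → ℝ} {y : Fin m → ℝ}

lemma qsoMap_mem_stdSimplex (hq0 : ∀ i j l, 0 ≤ q i j l) (hq1 : ∀ i j, ∑ l, q i j l = 1)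
    (hy : y ∈ stdSimplex ℝ (Fin m)) : qsoMap q y ∈ stdSimplex ℝ (Fin m) := by
  refine ⟨fun k => sum_nonneg fun i _ => sum_nonneg fun j _ =>
    mul_nonneg (mul_nonneg (hq0 i j k) (hy.1 i)) (hy.1 j), ?_⟩
  have hk : ∀ i j, ∑ k, q i j k * y i * y j = y i * y j := fun i j => by
    rw [← sum_mul, ← sum_mul, hq1, one_mul]
  calc ∑ k, ∑ i, ∑ j, q i j k * y i * y j = ∑ i, ∑ j, ∑ k, q i j k * y i * y j := by
        rw [sum_comm]; exact sum_congr rfl fun i _ => sum_comm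
    _ = 1 := by simp only [hk, ← sum_mul_sum, hy.2, one_mul]

lemma qsoMap_le_two_mul (hq0 : ∀ i j l, 0 ≤ q i j l) (hq1 : ∀ i j, ∑ l, q i j l = 1)
    (hvol : ∀ i j l, l ≠ i → l ≠ j → q i j l = 0) (hy : y ∈ stdSimplex ℝ (Fin m)) (k : Fin m) :
    qsoMap q y k ≤ 2 * y k := by
  have hterm : ∀ i j, q i j k * y i * y j ≤
      (if i = k then y i else 0) * y j + y i * (if j = k then y j else 0) := by
    intro i j
    have hyij : 0 ≤ y i * y j := mul_nonneg (hy.1 i) (hy.1 j)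
    have hq : q i j k ≤ 1 := hq1 i j ▸ single_le_sum (fun l _ => hq0 i j l) (mem_univ k)
    by_cases hik : i = k
    · subst hik; rw [if_pos rfl]
      split_ifs <;> nlinarith [hq0 i j i, mul_nonneg (hy.1 i) (hy.1 i)]
    by_cases hjk : j = k
    · subst hjk; rw [if_pos rfl, if_neg hik]
      nlinarith [hq0 i j j]
    rw [hvol i j k (Ne.symm hik) (Ne.symm hjk), if_neg hik, if_neg hjk]; simp
  calc qsoMap q y k ≤ ∑ i, ∑ j, ((if i = k then y i else 0) * y j +
        y i * (if j = k then y j else 0)) := sum_le_sum fun i _ => sum_le_sum fun j _ => hterm i j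
    _ = 2 * y k := by
      simp only [sum_add_distrib, ← sum_mul_sum, sum_ite_eq', mem_univ, if_true, hy.2]
      ring

lemma continuous_qsoMap : Continuous (qsoMap q) := by
  unfold qsoMap; fun_prop

end QSO

lemma stdSimplex_apply_le_half {ι : Type*} [Fintype ι] {y : ι → ℝ}
    (hy : y ∈ stdSimplex ℝ ι) {i j : ι} (hji : j ≠ i) (hmax : y j ≤ y i) : y j ≤ 1 / 2 := by
  classical
  have := sum_le_sum_of_subset_of_nonneg (subset_univ {j, i}) fun l _ _ => hy.1 l
  rw [sum_pair hji, hy.2] at this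
  linarith

lemma tsum_ofReal_eq_one {w : ℕ → ℝ} (hw0 : ∀ r, 0 ≤ w r) (hw1 : ∑' r, w r = 1) :
    ∑' r, ENNReal.ofReal (w r) = 1 := by
  have hw : Summable w := by
    by_contra h; simp [tsum_eq_zero_of_not_summable h] at hw1
  rw [← ENNReal.ofReal_tsum_of_nonneg hw0 hw, hw1, ENNReal.ofReal_one]

lemma tsum_mul_le_mul_add_one_sub_mul {w f : ℕ → ℝ≥0∞} (hw : ∑' r, w r = 1) {j : ℕ} {a b : ℝ≥0∞}
    (hj : f j ≤ a) (hf : ∀ r, f r ≤ b) : ∑' r, w r * f r ≤ w j * a + (1 - w j) * b := by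
  have hrest : ∑' r, (if r = j then 0 else w r) = 1 - w j := by
    refine ENNReal.eq_sub_of_add_eq (ne_top_of_le_ne_top ENNReal.one_ne_top
      (hw ▸ ENNReal.le_tsum j)) ?_
    rw [add_comm]; convert (ENNReal.tsum_eq_add_tsum_ite j).symm.trans hw
  rw [ENNReal.tsum_eq_add_tsum_ite j, ← hrest, ← ENNReal.tsum_mul_right]
  gcongr with r
  split_ifs
  exacts [zero_le, by gcongr; exact hf r]

lemma mul_add_one_sub_mul_le {a b v w : ℝ≥0∞} (hab : a ≤ b) (hvw : v ≤ w) (hw : w ≤ 1) :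
    w * a + (1 - w) * b ≤ v * a + (1 - v) * b := by
  calc w * a + (1 - w) * b = v * a + ((w - v) * a + (1 - w) * b) := by
        rw [← add_assoc, ← add_mul, add_tsub_cancel_of_le hvw]
    _ ≤ v * a + ((w - v) * b + (1 - w) * b) := by gcongr
    _ = v * a + (1 - v) * b := by rw [← add_mul, add_comm (w - v), tsub_add_tsub_cancel hw hvw]

/-- The largest coordinate is left out: it need not become small. -/
noncomputable def potential (v : ℝ) {m : ℕ} (y : Fin m → ℝ) : ℝ≥0∞ :=
  ⨅ i, ∑ j ∈ univ.erase i, ENNReal.ofReal (lyap v (y j))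

lemma potential_ne_top {m : ℕ} [Nonempty (Fin m)] (v : ℝ) (y : Fin m → ℝ) : potential v y ≠ ∞ :=
  ne_top_of_le_ne_top (ENNReal.sum_ne_top.2 fun _ _ => ENNReal.ofReal_ne_top)
    (iInf_le _ (Classical.arbitrary _))

section Potential

variable {v : ℝ} (hv : 0 < v) (hv8 : v ≤ 1 / 8) {m : ℕ}
include hv hv8

lemma measurable_potential : Measurable (potential v : (Fin m → ℝ) → ℝ≥0∞) :=
  Measurable.iInf fun _ => Finset.measurable_sum _ fun j _ =>
    ENNReal.measurable_ofReal.comp ((lyap_mono hv hv8).measurable.comp (measurable_pi_apply j))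

lemma ofReal_lyap_le_potential {ε : ℝ} {y : Fin m → ℝ} (h : ∀ i, ∃ j ≠ i, ε ≤ y j) :
    ENNReal.ofReal (lyap v ε) ≤ potential v y :=
  le_iInf fun i => by
    obtain ⟨j, hji, hj⟩ := h i
    exact (ENNReal.ofReal_le_ofReal (lyap_mono hv hv8 hj)).trans
      (single_le_sum (f := fun j => ENNReal.ofReal (lyap v (y j))) (fun _ _ => zero_le)
        (mem_erase.2 ⟨hji, mem_univ j⟩))

lemma sum_erase_argmax_le_potential {y : Fin m → ℝ} {i₀ : Fin m} (hmax : ∀ l, y l ≤ y i₀) :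
    ∑ j ∈ univ.erase i₀, ENNReal.ofReal (lyap v (y j)) ≤ potential v y := by
  refine le_iInf fun i => ?_
  rcases eq_or_ne i i₀ with rfl | hi
  · exact le_rfl
  rw [← add_sum_erase _ _ (mem_erase.2 ⟨hi, mem_univ i⟩),
    ← add_sum_erase _ _ (mem_erase.2 ⟨hi.symm, mem_univ i₀⟩), erase_right_comm]
  gcongr
  exact lyap_mono hv hv8 (hmax i)

variable {p : ℕ → Fin m → Fin m → Fin m → ℝ} (hnonneg : ∀ n i j l, 0 ≤ p n i j l)
  (hsum : ∀ n i j, ∑ l, p n i j l = 1) (hvol : ∀ n i j l, l ≠ i → l ≠ j → p n i j l = 0)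
  (hsq : ∀ k : Fin m, ∀ x ∈ stdSimplex ℝ (Fin m), qsoMap (p (k : ℕ)) x k = x k ^ 2)
  {w : ℕ → ℝ≥0∞} (hw : ∑' r, w r = 1) (hvw : ∀ k : Fin m, ENNReal.ofReal v ≤ w k)
include hnonneg hsum hvol hsq hw hvw

lemma tsum_mul_lyap_qsoMap_le {y : Fin m → ℝ} (hy : y ∈ stdSimplex ℝ (Fin m)) {j : Fin m}
    (hj : y j ≤ 1 / 2) :
    ∑' r, w r * ENNReal.ofReal (lyap v (qsoMap (p r) y j)) ≤
      ENNReal.ofReal (rate v) * ENNReal.ofReal (lyap v (y j)) := by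
  have hy0 := hy.1 j
  calc ∑' r, w r * ENNReal.ofReal (lyap v (qsoMap (p r) y j))
      ≤ w j * ENNReal.ofReal (lyap v (y j ^ 2)) + (1 - w j) * ENNReal.ofReal (lyap v (2 * y j)) :=
        tsum_mul_le_mul_add_one_sub_mul hw (hsq j y hy ▸ le_rfl) fun r =>
          ENNReal.ofReal_le_ofReal <| lyap_mono hv hv8 <|
            qsoMap_le_two_mul (hnonneg r) (hsum r) (hvol r) hy j
    _ ≤ ENNReal.ofReal v * ENNReal.ofReal (lyap v (y j ^ 2)) +
          (1 - ENNReal.ofReal v) * ENNReal.ofReal (lyap v (2 * y j)) :=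
        mul_add_one_sub_mul_le
          (ENNReal.ofReal_le_ofReal (lyap_mono hv hv8 (by nlinarith))) (hvw j)
          (hw ▸ ENNReal.le_tsum _)
    _ = ENNReal.ofReal ((1 - v) * lyap v (2 * y j) + v * lyap v (y j ^ 2)) := by
        rw [← ENNReal.ofReal_one, ← ENNReal.ofReal_sub _ hv.le, ← ENNReal.ofReal_mul hv.le,
          ← ENNReal.ofReal_mul (by linarith), add_comm,
          ← ENNReal.ofReal_add (mul_nonneg (by linarith) (lyap_nonneg _ _))
            (mul_nonneg hv.le (lyap_nonneg _ _))]
    _ ≤ ENNReal.ofReal (rate v * lyap v (y j)) :=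
        ENNReal.ofReal_le_ofReal (lyap_drift hv hv8 hy0 hj)
    _ = ENNReal.ofReal (rate v) * ENNReal.ofReal (lyap v (y j)) :=
        ENNReal.ofReal_mul (rate_nonneg hv hv8)

lemma tsum_mul_potential_qsoMap_le {y : Fin m → ℝ} (hy : y ∈ stdSimplex ℝ (Fin m)) :
    ∑' r, w r * potential v (qsoMap (p r) y) ≤ ENNReal.ofReal (rate v) * potential v y := by
  obtain ⟨i₀, -, hmax⟩ := exists_max_image univ y
    (nonempty_of_sum_ne_zero (hy.2 ▸ one_ne_zero))
  calc ∑' r, w r * potential v (qsoMap (p r) y)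
      ≤ ∑' r, ∑ j ∈ univ.erase i₀, w r * ENNReal.ofReal (lyap v (qsoMap (p r) y j)) :=
        ENNReal.tsum_le_tsum fun r => by rw [← mul_sum]; gcongr; exact iInf_le _ i₀
    _ = ∑ j ∈ univ.erase i₀, ∑' r, w r * ENNReal.ofReal (lyap v (qsoMap (p r) y j)) :=
        Summable.tsum_finsetSum fun _ _ => ENNReal.summable
    _ ≤ ∑ j ∈ univ.erase i₀, ENNReal.ofReal (rate v) * ENNReal.ofReal (lyap v (y j)) :=
        sum_le_sum fun j hj => tsum_mul_lyap_qsoMap_le hv hv8 hnonneg hsum hvol hsq hw hvw hy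
          (stdSimplex_apply_le_half hy (ne_of_mem_erase hj) (hmax j (mem_univ j)))
    _ ≤ ENNReal.ofReal (rate v) * potential v y := by
        rw [← mul_sum]
        gcongr
        exact sum_erase_argmax_le_potential hv hv8 fun l => hmax l (mem_univ l)

lemma lintegral_potential_orbit_le {Ω : Type*} {mΩ : MeasurableSpace Ω} {μ : Measure Ω}
    [IsProbabilityMeasure μ] {ξ : ℕ → Ω → ℕ} (hξ : ∀ n, Measurable (ξ n)) (hind : iIndepFun ξ μ)
    (hlaw : ∀ n r, μ {ω | ξ n ω = r} = w r) {x : Fin m → ℝ} (hx : x ∈ stdSimplex ℝ (Fin m))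
    (N : ℕ) :
    ∫⁻ ω, potential v (orbit (fun r => qsoMap (p r)) x (ξ · ω) N) ∂μ ≤
      ENNReal.ofReal (rate v) ^ N * potential v x :=
  lintegral_orbit_le (fun _ => continuous_qsoMap.measurable) hξ hind hlaw
    (fun r _ hy => qsoMap_mem_stdSimplex (hnonneg r) (hsum r) hy) hx (measurable_potential hv hv8)
    (fun _ hy => tsum_mul_potential_qsoMap_le hv hv8 hnonneg hsum hvol hsq hw hvw hy) N

end Potential

end RandomVolterra

open RandomVolterra

theorem random_volterra_exit_prob_summable_general
    {Ω : Type*} {mΩ : MeasurableSpace Ω} (μ : Measure Ω) [IsProbabilityMeasure μ]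
    (m : ℕ)
    (p : ℕ → Fin m → Fin m → Fin m → ℝ)
    (hnonneg : ∀ n i j l, 0 ≤ p n i j l)
    (hsum : ∀ n i j, ∑ l, p n i j l = 1)
    (hvol : ∀ n i j l, l ≠ i → l ≠ j → p n i j l = 0)
    (hsq : ∀ k : Fin m, ∀ x ∈ stdSimplex ℝ (Fin m), qsoMap (p (k : ℕ)) x k = x k ^ 2)
    (ν : ℕ → ℝ) (hν0 : ∀ j, 0 ≤ ν j) (hν1 : ∑' j, ν j = 1)
    (hνpos : ∀ k : Fin m, 0 < ν (k : ℕ))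
    (ξ : ℕ → Ω → ℕ) (hξmeas : ∀ n, Measurable (ξ n))
    (hindep : iIndepFun ξ μ)
    (hlaw : ∀ n j, μ {ω | ξ n ω = j} = ENNReal.ofReal (ν j))
    (ε : ℝ) (hε : 0 < ε) :
    ∀ x ∈ stdSimplex ℝ (Fin m),
      (∑' n : ℕ, μ {ω |
          ((List.range (n + 1)).foldl (fun y l => qsoMap (p (ξ l ω)) y) x)
              ∈ stdSimplex ℝ (Fin m) ∧
          ¬ ∃ i : Fin m, ∀ j : Fin m, j ≠ i →
            ((List.range (n + 1)).foldl (fun y l => qsoMap (p (ξ l ω)) y) x) j < ε})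
        < ⊤ := by
  intro x hx
  have : Nonempty (Fin m) := univ_nonempty_iff.1 (nonempty_of_sum_ne_zero (hx.2 ▸ one_ne_zero))
  obtain ⟨k₀, hk₀⟩ := Finite.exists_min fun k : Fin m => ν k
  set v := min (1 / 8) (ν k₀)
  have hv : 0 < v := lt_min (by norm_num) (hνpos k₀)
  have hv8 : v ≤ 1 / 8 := min_le_left _ _
  have hvw (k : Fin m) : ENNReal.ofReal v ≤ ENNReal.ofReal (ν k) :=
    ENNReal.ofReal_le_ofReal ((min_le_right _ _).trans (hk₀ k))
  have hdecay (n : ℕ) :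
      ∫⁻ ω, potential v (orbit (fun r => qsoMap (p r)) x (ξ · ω) (n + 1)) ∂μ ≤
        ENNReal.ofReal (rate v) ^ n * (ENNReal.ofReal (rate v) * potential v x) := by
    rw [← mul_assoc, ← pow_succ]
    exact lintegral_potential_orbit_le hv hv8 hnonneg hsum hvol hsq (tsum_ofReal_eq_one hν0 hν1)
      hvw hξmeas hindep hlaw hx (n + 1)
  refine lt_of_le_of_lt (ENNReal.tsum_le_tsum fun n => measure_mono ?_)
    (tsum_measure_le_lt_top_of_lintegral_le_geometric
      (fun n => ((measurable_potential hv hv8).comp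
        (measurable_orbit (fun r => continuous_qsoMap.measurable) hξmeas (n + 1))).aemeasurable)
      (ENNReal.ofReal_lt_one.2 (rate_lt_one hv hv8))
      (ENNReal.mul_ne_top ENNReal.ofReal_ne_top (potential_ne_top v x))
      (ENNReal.ofReal_pos.2 (lyap_pos v hε)).ne' ENNReal.ofReal_ne_top hdecay)
  rintro ω ⟨-, hexit⟩
  push Not at hexit
  exact ofReal_lyap_le_potential hv hv8 hexit

/-- In the setting of the main theorem, for every `ε > 0` and every
`x ∈ S^{m-1}` the probabilities `ℙ(T_n ∘ ⋯ ∘ T_1 (x) ∈ S^{m-1} \ U_ε)` are summable. -/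
theorem random_volterra_exit_prob_summable
    {Ω : Type*} {mΩ : MeasurableSpace Ω} (μ : Measure Ω) [IsProbabilityMeasure μ]
    (m : ℕ) (hm : 2 ≤ m)
    (p : ℕ → Fin m → Fin m → Fin m → ℝ)
    (hsymm : ∀ n i j l, p n i j l = p n j i l)
    (hnonneg : ∀ n i j l, 0 ≤ p n i j l)
    (hsum : ∀ n i j, ∑ l, p n i j l = 1)
    (hvol : ∀ n i j l, l ≠ i → l ≠ j → p n i j l = 0)
    (hsq : ∀ k : Fin m, ∀ x ∈ stdSimplex ℝ (Fin m), qsoMap (p (k : ℕ)) x k = x k ^ 2)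
    (ν : ℕ → ℝ) (hν0 : ∀ j, 0 ≤ ν j) (hν1 : ∑' j, ν j = 1)
    (hνpos : ∀ k : Fin m, 0 < ν (k : ℕ))
    (ξ : ℕ → Ω → ℕ) (hξmeas : ∀ n, Measurable (ξ n))
    (hindep : iIndepFun ξ μ)
    (hlaw : ∀ n j, μ {ω | ξ n ω = j} = ENNReal.ofReal (ν j))
    (ε : ℝ) (hε : 0 < ε) :
    ∀ x ∈ stdSimplex ℝ (Fin m),
      (∑' n : ℕ, μ {ω |
          ((List.range (n + 1)).foldl (fun y l => qsoMap (p (ξ l ω)) y) x)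
              ∈ stdSimplex ℝ (Fin m) ∧
          ¬ ∃ i : Fin m, ∀ j : Fin m, j ≠ i →
            ((List.range (n + 1)).foldl (fun y l => qsoMap (p (ξ l ω)) y) x) j < ε})
        < ⊤ :=
  random_volterra_exit_prob_summable_general (mΩ := mΩ) μ m p hnonneg hsum hvol hsq ν hν0 hν1 hνpos
    ξ hξmeas hindep hlaw ε hε
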